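/- arXiv:2412.02199 — 3 statements merged into one kernel-verified Lean document; each statement's English description precedes it below -/
import Mathlib

section
/- A topological space X is ω-Lindelöf (every ω-cover contains a countable ω-subcover) if all finite powers Xⁿ are Lindelöf; conversely if X satisfies the selection principle S_fin(Ω, Ω) for ω-covers, then every finite power of X is Lindelöf. -/
open Filter

/-- An ω-cover of `X`: a family of open sets, not containing `X` itself, such that
every finite subset of `X` is contained in some member. -/
def IsOmegaCover {X : Type*} [TopologicalSpace X] (U : Set (Set X)) : Prop :=
  (∀ u ∈ U, IsOpen u) ∧ Set.univ ∉ U ∧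
    ∀ F : Set X, F.Finite → ∃ u ∈ U, F ⊆ u

/-- If all finite powers of `X` are Lindelöf then `X` is ω-Lindelöf (every ω-cover has
a countable ω-subcover); conversely, if `X` satisfies `S_fin(Ω,Ω)` then every finite
power of `X` is Lindelöf. -/
theorem stmt_8 {X : Type*} [TopologicalSpace X] :
    ((∀ n : ℕ, LindelofSpace (Fin n → X)) →
      ∀ U : Set (Set X), IsOmegaCover U →
        ∃ V ⊆ U, V.Countable ∧ IsOmegaCover V) ∧
    ((∀ U : ℕ → Set (Set X), (∀ n, IsOmegaCover (U n)) →
        ∃ B : ℕ → Set (Set X), (∀ n, B n ⊆ U n ∧ (B n).Finite) ∧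
          IsOmegaCover (⋃ n, B n)) →
      ∀ n : ℕ, LindelofSpace (Fin n → X)) := by
  classical
  constructor
  · -- all finite powers Lindelöf → ω-Lindelöf
    intro h U hU
    have key : ∀ n : ℕ, ∃ r : Set U, r.Countable ∧
        (Set.univ : Set (Fin n → X)) ⊆
          ⋃ u ∈ r, {f : Fin n → X | ∀ i, f i ∈ (u : Set X)} := by
      intro n
      refine (h n).isLindelof_univ.elim_countable_subcover
        (fun u : U => {f : Fin n → X | ∀ i, f i ∈ (u : Set X)}) (fun u => ?_) ?_
      · have : {f : Fin n → X | ∀ i, f i ∈ (u : Set X)} =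
            Set.pi Set.univ (fun _ : Fin n => (u : Set X)) := by
          ext f; simp [Set.mem_pi]
        show IsOpen {f : Fin n → X | ∀ i, f i ∈ (u : Set X)}
        rw [this]
        exact isOpen_set_pi Set.finite_univ (fun i _ => hU.1 u u.2)
      · intro f _
        obtain ⟨u, huU, hu⟩ := hU.2.2 (Set.range f) (Set.finite_range f)
        exact Set.mem_iUnion.2 ⟨⟨u, huU⟩, fun i => hu ⟨i, rfl⟩⟩
    choose r hrc hrcov using key
    refine ⟨⋃ n, (fun u : U => (u : Set X)) '' (r n), ?_, ?_, ?_, ?_, ?_⟩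
    · rintro v hv
      obtain ⟨n, hn⟩ := Set.mem_iUnion.1 hv
      obtain ⟨u, _, rfl⟩ := hn
      exact u.2
    · exact Set.countable_iUnion fun n => (hrc n).image _
    · rintro v hv
      obtain ⟨n, hn⟩ := Set.mem_iUnion.1 hv
      obtain ⟨u, _, rfl⟩ := hn
      exact hU.1 u u.2
    · intro hmem
      obtain ⟨n, hn⟩ := Set.mem_iUnion.1 hmem
      obtain ⟨u, _, huniv⟩ := hn
      exact hU.2.1 (huniv ▸ u.2)
    · intro F hF
      obtain ⟨n, f, -, rfl⟩ := hF.fin_param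
      have := hrcov n (Set.mem_univ f)
      obtain ⟨u, hur, hfu⟩ := Set.mem_iUnion₂.1 this
      refine ⟨(u : Set X), Set.mem_iUnion.2 ⟨n, ⟨u, hur, rfl⟩⟩, ?_⟩
      rintro _ ⟨i, rfl⟩
      exact hfu i
  · -- S_fin(Ω,Ω) → all finite powers Lindelöf
    intro hS n
    constructor
    apply isLindelof_of_countable_subcover
    intro ι U hUo hUc
    by_cases hfin : ∃ t : Finset ι, (Set.univ : Set (Fin n → X)) ⊆ ⋃ i ∈ t, U i
    · obtain ⟨t, ht⟩ := hfin
      exact ⟨↑t, t.countable_toSet, ht⟩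
    · push_neg at hfin
      -- choices: index and a basic open box around each point
      have hcov : ∀ p : Fin n → X, ∃ i, p ∈ U i := fun p =>
        Set.mem_iUnion.1 (hUc (Set.mem_univ p))
      choose ip hip using hcov
      have hbox : ∀ p : Fin n → X, ∃ w : Fin n → Set X,
          (∀ j, IsOpen (w j)) ∧ (∀ j, p j ∈ w j) ∧ Set.univ.pi w ⊆ U (ip p) := by
        intro p
        obtain ⟨I, u, hu, hsub⟩ := (isOpen_pi_iff.1 (hUo (ip p))) p (hip p)
        refine ⟨fun j => if j ∈ I then u j else Set.univ, fun j => ?_, fun j => ?_, ?_⟩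
        · by_cases hj : j ∈ I
          · simpa [hj] using (hu j hj).1
          · simp [hj]
        · by_cases hj : j ∈ I
          · simpa [hj] using (hu j hj).2
          · simp [hj]
        · intro f hf
          apply hsub
          intro j hj
          have := hf j (Set.mem_univ j)
          simpa [Finset.mem_coe.1 hj] using this
      choose w hwo hwp hws using hbox
      -- the ω-cover of X
      set W : Set (Set X) := {v | IsOpen v ∧ v ≠ Set.univ ∧
        ∃ t : Finset ι, {f : Fin n → X | ∀ j, f j ∈ v} ⊆ ⋃ i ∈ t, U i} with hWdef
      -- construction of a member of W around any finite set
      have hWcover : IsOmegaCover W := by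
        refine ⟨fun v hv => hv.1, fun hv => hv.2.1 rfl, ?_⟩
        intro F hF
        set P : Set (Fin n → X) := {p | ∀ j, p j ∈ F} with hPdef
        have hPfin : P.Finite := by
          have : P = Set.pi Set.univ (fun _ : Fin n => F) := by
            ext p; simp [hPdef, Set.mem_pi]
          rw [this]
          exact Set.Finite.pi fun _ => hF
        set wx : X → Set X := fun x =>
          ⋂ p ∈ P, ⋂ j : Fin n, if p j = x then w p j else Set.univ with hwxdef
        have hwx_open : ∀ x, IsOpen (wx x) := by
          intro x
          refine hPfin.isOpen_biInter fun p _ => isOpen_iInter_of_finite fun j => ?_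
          by_cases hpj : p j = x
          · simpa [hpj] using hwo p j
          · simp [hpj]
        have hwx_mem : ∀ x ∈ F, x ∈ wx x := by
          intro x _
          refine Set.mem_iInter₂.2 fun p _ => Set.mem_iInter.2 fun j => ?_
          by_cases hpj : p j = x
          · simpa [hpj] using hpj ▸ hwp p j
          · simp [hpj]
        set uF : Set X := ⋃ x ∈ F, wx x with huFdef
        have huF_open : IsOpen uF := isOpen_biUnion fun x _ => hwx_open x
        have hFsub : F ⊆ uF := fun x hx => Set.mem_biUnion hx (hwx_mem x hx)
        set t : Finset ι := hPfin.toFinset.image ip with htdef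
        have hpow : {f : Fin n → X | ∀ j, f j ∈ uF} ⊆ ⋃ i ∈ t, U i := by
          intro f hf
          have hx : ∀ j : Fin n, ∃ x, ∃ _ : x ∈ F, f j ∈ wx x := fun j =>
            Set.mem_iUnion₂.1 (hf j)
          choose x hxF hfx using hx
          have hxP : x ∈ P := fun j => hxF j
          have hfU : f ∈ U (ip x) := by
            apply hws x
            intro j _
            have := Set.mem_iInter.1 (Set.mem_iInter₂.1 (hfx j) x hxP) j
            simpa using this
          refine Set.mem_iUnion₂.2 ⟨ip x, ?_, hfU⟩
          exact Finset.mem_image.2 ⟨x, hPfin.mem_toFinset.2 hxP, rfl⟩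
        have huF_ne : uF ≠ Set.univ := by
          intro h
          apply hfin t
          intro f _
          exact hpow (by simp [h])
        exact ⟨uF, ⟨huF_open, huF_ne, t, hpow⟩, hFsub⟩
      obtain ⟨B, hB, hBcover⟩ := hS (fun _ => W) (fun _ => hWcover)
      set tset : Set X → Finset ι := fun v =>
        if h : ∃ t : Finset ι, {f : Fin n → X | ∀ j, f j ∈ v} ⊆ ⋃ i ∈ t, U i
        then h.choose else ∅ with htsetdef
      refine ⟨⋃ v ∈ ⋃ m, B m, ↑(tset v), ?_, ?_⟩
      · exact Set.Countable.biUnion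
          (Set.countable_iUnion fun m => (hB m).2.countable)
          (fun v _ => (tset v).countable_toSet)
      · intro f _
        obtain ⟨v, hvV, hvF⟩ := hBcover.2.2 (Set.range f) (Set.finite_range f)
        obtain ⟨m, hvB⟩ := Set.mem_iUnion.1 hvV
        have hvW : v ∈ W := (hB m).1 hvB
        have hex := hvW.2.2
        have hfv : f ∈ {g : Fin n → X | ∀ j, g j ∈ v} := fun j => hvF ⟨j, rfl⟩
        have hmem : f ∈ ⋃ i ∈ hex.choose, U i := hex.choose_spec hfv
        obtain ⟨i, hit, hfU⟩ := Set.mem_iUnion₂.1 hmem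
        refine Set.mem_iUnion₂.2 ⟨i, ?_, hfU⟩
        refine Set.mem_biUnion hvV ?_
        have : tset v = hex.choose := dif_pos hex
        rw [this]
        exact hit
end

section
/- If a topological group G with identity e and a G*-regular space X are given, then there exists g ∈ G with g ≠ e such that for each open set U ⊆ X and each non-empty finite set F ⊆ U there is a continuous function f : X → G satisfying f(F) ⊆ {e} and f(X \ U) ⊆ {g⁻¹}. -/
/-!
Pass to the separation quotient of `G`, which is a `T1` group, so that level sets of continuous
maps into it are closed. There, separating points from closed sets by maps taking the value `g`
upgrades to finite sets by induction: if `f` is `g` on `F` and `1` on `C` but `f x ≠ g`, separate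
`x` from `C ∪ f⁻¹{g}` by `k`, and use the induction hypothesis on `C ∪ f⁻¹{f x}` to get `f'`
which is `g` on `F` and `1` at `x`; then `f' * k` is `g` on `insert x F`. Multiplying by
`(mk g)⁻¹` gives a map that is `1` on `F` and `(mk g)⁻¹` off `U`, and it lifts to `G` with these
exact values, because open sets of `G` are unions of inseparability classes.
-/

def GStarRegular (X G : Type*) [TopologicalSpace X] [TopologicalSpace G]
    [Group G] : Prop :=
  ∃ g : G, g ≠ 1 ∧ ∀ F : Set X, IsClosed F → ∀ x ∉ F,
    ∃ f : X → G, Continuous f ∧ f x = g ∧ ∀ y ∈ F, f y = 1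

def GStarRegularWith (X : Type*) {G : Type*} [TopologicalSpace X] [TopologicalSpace G] [One G]
    (g : G) : Prop :=
  ∀ C : Set X, IsClosed C → ∀ x ∉ C, ∃ f : X → G, Continuous f ∧ f x = g ∧ ∀ y ∈ C, f y = 1

theorem SeparationQuotient.exists_continuous_lift_eqOn {X Y : Type*} [TopologicalSpace X]
    [TopologicalSpace Y] {h : X → SeparationQuotient Y} (hh : Continuous h) {S : Set X}
    {v : X → Y} (hv : ∀ x ∈ S, mk (v x) = h x) :
    ∃ f : X → Y, Continuous f ∧ Set.EqOn f v S := by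
  classical
  refine ⟨S.piecewise v (Function.surjInv surjective_mk ∘ h), ?_, Set.piecewise_eqOn _ _ _⟩
  refine isInducing_mk.continuous_iff.2 (hh.congr fun x => ?_)
  by_cases hx : x ∈ S
  · simp [hx, hv x hx]
  · simp [hx, Function.surjInv_eq surjective_mk]

namespace GStarRegularWith

variable {X G H : Type*} [TopologicalSpace X] [TopologicalSpace G] [TopologicalSpace H]

theorem map [One G] [One H] {F : Type*} [FunLike F G H] [OneHomClass F G H] {g : G}
    (hg : GStarRegularWith X g) (φ : F) (hφ : Continuous φ) : GStarRegularWith X (φ g) := by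
  intro C hC x hx
  obtain ⟨f, hf, hfx, hfC⟩ := hg C hC x hx
  exact ⟨φ ∘ f, hφ.comp hf, congrArg φ hfx, fun y hy => by simp [hfC y hy]⟩

theorem exists_eq_on_finite [MulOneClass G] [ContinuousMul G] [T1Space G] {g : G}
    (hg : GStarRegularWith X g) {F : Set X} (hF : F.Finite) :
    ∀ C : Set X, IsClosed C → Disjoint F C →
      ∃ f : X → G, Continuous f ∧ (∀ x ∈ F, f x = g) ∧ ∀ y ∈ C, f y = 1 := by
  induction F, hF using Set.Finite.induction_on with
  | empty => exact fun C _ _ => ⟨fun _ => 1, continuous_const, by simp, fun _ _ => rfl⟩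
  | @insert x F _ _ ih =>
    intro C hC hFC
    obtain ⟨hxC, hFC⟩ := Set.disjoint_insert_left.1 hFC
    obtain ⟨f, hf, hfF, hfC⟩ := ih C hC hFC
    by_cases hfx : f x = g
    · exact ⟨f, hf, by simpa [hfx] using hfF, hfC⟩
    obtain ⟨k, hk, hkx, hkC⟩ :=
      hg (C ∪ f ⁻¹' {g}) (hC.union (isClosed_singleton.preimage hf)) x (by simp [hxC, hfx])
    obtain ⟨f', hf', hf'F, hf'C⟩ :=
      ih (C ∪ f ⁻¹' {f x}) (hC.union (isClosed_singleton.preimage hf))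
        (Set.disjoint_union_right.2
          ⟨hFC, Set.disjoint_left.2 fun y hy => by simp [hfF y hy, Ne.symm hfx]⟩)
    refine ⟨f' * k, hf'.mul hk, ?_, fun y hy => ?_⟩
    · rintro y (rfl | hy)
      · simp [hf'C y (Or.inr rfl), hkx]
      · simp [hf'F y hy, hkC y (Or.inr (hfF y hy))]
    · simp [hf'C y (Or.inl hy), hkC y (Or.inl hy)]

end GStarRegularWith

open SeparationQuotient in
/-- If `X` is `G*`-regular, then there is `g ≠ e` such that for each open `U ⊆ X` and each
nonempty finite `F ⊆ U` there is a continuous `f : X → G` with `f(F) ⊆ {e}` and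
`f(X \ U) ⊆ {g⁻¹}`. -/
theorem stmt_9 {X G : Type*} [TopologicalSpace X] [TopologicalSpace G]
    [Group G] [IsTopologicalGroup G] (h : GStarRegular X G) :
    ∃ g : G, g ≠ 1 ∧ ∀ U : Set X, IsOpen U → ∀ F : Set X, F.Finite → F.Nonempty →
      F ⊆ U → ∃ f : X → G, Continuous f ∧ (∀ x ∈ F, f x = 1) ∧
        ∀ x ∈ Set.univ \ U, f x = g⁻¹ := by
  classical
  obtain ⟨g, hg1, hg : GStarRegularWith X g⟩ := h
  refine ⟨g, hg1, fun U hU F hF _ hFU => ?_⟩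
  have hUF : ∀ x ∉ U, x ∉ F := fun x hxU hxF => hxU (hFU hxF)
  obtain ⟨k, hk, hkF, hkU⟩ := (hg.map mkMonoidHom continuous_mk).exists_eq_on_finite hF Uᶜ
    hU.isClosed_compl (Set.disjoint_compl_right_iff_subset.2 hFU)
  obtain ⟨f, hf, hfv⟩ := exists_continuous_lift_eqOn (hk.mul (continuous_const (y := (mk g)⁻¹)))
    (S := F ∪ Uᶜ) (v := fun x => if x ∈ F then 1 else g⁻¹) <| by
      rintro x (hxF | hxU)
      · simp [hxF, hkF x hxF]
      · simp [hkU x hxU, hUF x hxU, mk_inv]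
  refine ⟨f, hf, fun x hxF => by simp [hfv (Or.inl hxF), hxF], fun x hx => ?_⟩
  simp [hfv (Or.inr hx.2), hUF x hx.2]
end

section
/- If X is a topological space with a network of cardinality ≤ κ (κ infinite) and G is a second-countable topological group, then the space C_p(X,G) of continuous functions X → G with the topology of pointwise convergence has a network of cardinality ≤ κ; i.e., nw(C_p(X,G)) ≤ nw(X) when nw(X) is infinite. -/
open Cardinal

universe u

/-- A network for a topological space. -/
def IsNetwork {Y : Type*} [TopologicalSpace Y] (N : Set (Set Y)) : Prop :=
  ∀ y : Y, ∀ U : Set Y, IsOpen U → y ∈ U → ∃ M ∈ N, y ∈ M ∧ M ⊆ U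

/-!
Let `B` be a countable base of `G`. A basic neighbourhood of `f` in `C_p(X, G)` constrains the
values of `f` at finitely many points `xᵢ` to open sets, which can be shrunk to `bᵢ ∈ B`; by
continuity of `f` there are `nᵢ ∈ N` with `xᵢ ∈ nᵢ ⊆ f⁻¹(bᵢ)`. Hence the sets
`{g | g(nᵢ) ⊆ bᵢ for all i}`, indexed by finite subsets of `N × B`, form a network of
`C_p(X, G)`, and there are at most `max ℵ₀ (#N * ℵ₀) ≤ κ` of them.
-/

open Set TopologicalSpace

theorem Cardinal.mk_finset_le_max (α : Type u) : #(Finset α) ≤ max ℵ₀ #α := by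
  classical exact (mk_le_of_surjective List.toFinset_surjective).trans (mk_list_le_max α)

theorem exists_finset_basis_subset_of_isOpen {X Y : Type*} [TopologicalSpace Y]
    {B : Set (Set Y)} (hB : IsTopologicalBasis B) {p : (X → Y) → Prop} {U : Set (Subtype p)} (hU : IsOpen U) {f : Subtype p} (hf : f ∈ U) :
    ∃ (I : Finset X) (b : X → Set Y), (∀ x ∈ I, b x ∈ B ∧ f.1 x ∈ b x) ∧
      {g : Subtype p | ∀ x ∈ I, g.1 x ∈ b x} ⊆ U := by
  obtain ⟨V, hV, rfl⟩ := isOpen_induced_iff.mp hU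
  obtain ⟨I, u, hu, hIu⟩ := isOpen_pi_iff.mp hV f.1 hf
  have hb : ∀ x ∈ I, ∃ b ∈ B, f.1 x ∈ b ∧ b ⊆ u x := fun x hx =>
    hB.exists_subset_of_mem_open (hu x hx).2 (hu x hx).1
  choose! b hbB hfb hbu using hb
  exact ⟨I, b, fun x hx => ⟨hbB x hx, hfb x hx⟩,
    fun g hg => hIu fun x hx => hbu x hx (hg x hx)⟩

section PointwiseConvergence

variable {X Y : Type*} [TopologicalSpace X] [TopologicalSpace Y]

def mapsToNetwork (N : Set (Set X)) (B : Set (Set Y)) : Set (Set {f : X → Y // Continuous f}) :=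
  range fun s : Finset (N × B) => {g | ∀ c ∈ s, MapsTo g.1 c.1 c.2}

theorem isNetwork_mapsToNetwork {N : Set (Set X)} (hN : IsNetwork N) {B : Set (Set Y)}
    (hB : IsTopologicalBasis B) : IsNetwork (mapsToNetwork N B) := by
  classical
  intro f U hU hfU
  obtain ⟨I, b, hb, hIU⟩ := exists_finset_basis_subset_of_isOpen hB hU hfU
  have hn : ∀ x ∈ I, ∃ n ∈ N, x ∈ n ∧ n ⊆ f.1 ⁻¹' b x := fun x hx =>
    hN x _ ((hB.isOpen (hb x hx).1).preimage f.2) (hb x hx).2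
  choose! n hnN hxn hnb using hn
  let c : I → N × B := fun x => (⟨n x, hnN x x.2⟩, ⟨b x, (hb x x.2).1⟩)
  refine ⟨_, ⟨I.attach.image c, rfl⟩, ?_, fun g hg => hIU fun x hx => ?_⟩
  · simp only [Finset.mem_image, Finset.mem_attach, true_and, forall_exists_index,
      forall_apply_eq_imp_iff]
    exact fun x => hnb x x.2
  · exact hg (c ⟨x, hx⟩) (Finset.mem_image_of_mem c (Finset.mem_attach _ _)) (hxn x hx)

end PointwiseConvergence

theorem stmt_13_general {X G : Type u} [TopologicalSpace X] [TopologicalSpace G]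
    [SecondCountableTopology G]
    (κ : Cardinal.{u}) (hκ : ℵ₀ ≤ κ)
    (N : Set (Set X)) (hN : IsNetwork N) (hNκ : #N ≤ κ) :
    ∃ M : Set (Set {f : X → G // Continuous f}),
      IsNetwork M ∧ #M ≤ κ := by
  let B := countableBasis G
  have hB : #B ≤ ℵ₀ := (countable_countableBasis G).le_aleph0
  refine ⟨mapsToNetwork N B, isNetwork_mapsToNetwork hN (isBasis_countableBasis G), ?_⟩
  calc #(mapsToNetwork N B) ≤ #(Finset (N × B)) := mk_range_le
    _ ≤ max ℵ₀ (#N * #B) := by simpa using mk_finset_le_max (N × B)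
    _ ≤ κ := max_le hκ (mul_le_of_le hκ hNκ (hB.trans hκ))

/-- If `X` has a network of cardinality `≤ κ` (`κ` infinite) and `G` is a second-countable
topological group, then `C_p(X,G)` (continuous functions with the topology of pointwise
convergence, i.e. the subspace topology from the product `G^X`) has a network of
cardinality `≤ κ`. -/
theorem stmt_13 {X G : Type u} [TopologicalSpace X] [TopologicalSpace G]
    [Group G] [IsTopologicalGroup G] [SecondCountableTopology G]
    (κ : Cardinal.{u}) (hκ : ℵ₀ ≤ κ)
    (N : Set (Set X)) (hN : IsNetwork N) (hNκ : #N ≤ κ) :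
    ∃ M : Set (Set {f : X → G // Continuous f}),
      IsNetwork M ∧ #M ≤ κ :=
  stmt_13_general κ hκ N hN hNκ
end
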